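/- arXiv:2408.12761 — 9 statements merged into one kernel-verified Lean document; each statement's English description precedes it below -/
import Mathlib

section
/- Let T ⊆ ℝ^n be an allowable flow set and let K be its flow cone. Then for every x ∈ ℝ^n, inf{λ ∈ ℝ : λ ≥ 0 and (x, −λ) ∈ K} = inf{λ ∈ ℝ : λ > 0 and x/λ ∈ T}, where both infima are taken in ℝ ∪ {+∞} with inf ∅ = +∞. In other words, the homogeneous function λ ↦ min{λ ≥ 0 : (x, −λ) ∈ K} defined by the flow cone coincides with the Minkowski functional of T. -/
/-- An allowable flow set in `ℝ^n`: nonempty, closed, convex, downward closed,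
and containing the zero vector. -/
def IsAllowableFlowSet {n : ℕ} (T : Set (Fin n → ℝ)) : Prop :=
  T.Nonempty ∧ IsClosed T ∧ Convex ℝ T ∧
    (∀ x ∈ T, ∀ x' : Fin n → ℝ, x' ≤ x → x' ∈ T) ∧ (0 : Fin n → ℝ) ∈ T

/-- The flow cone of a set `T ⊆ ℝ^n`:
`K = cl{(x, −λ) : λ > 0, x/λ ∈ T} ⊆ ℝ^{n+1}`. -/
def flowCone {n : ℕ} (T : Set (Fin n → ℝ)) : Set ((Fin n → ℝ) × ℝ) :=
  closure {p : (Fin n → ℝ) × ℝ | ∃ l : ℝ, 0 < l ∧ p.2 = -l ∧ l⁻¹ • p.1 ∈ T}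

open Topology Filter in
/-- for every `x ∈ ℝ^n`, the gauge defined by the flow cone,
`inf{λ ≥ 0 : (x, −λ) ∈ K}`, coincides with the Minkowski functional of `T`,
`inf{λ > 0 : x/λ ∈ T}`, both infima taken in the extended reals so that
`inf ∅ = +∞`. -/
theorem flowCone_gauge_eq_minkowski
    {n : ℕ} (T : Set (Fin n → ℝ)) (hT : IsAllowableFlowSet T) (x : Fin n → ℝ) :
    sInf {v : EReal | ∃ l : ℝ, 0 ≤ l ∧ (x, -l) ∈ flowCone T ∧ v = (l : EReal)} =
      sInf {v : EReal | ∃ l : ℝ, 0 < l ∧ l⁻¹ • x ∈ T ∧ v = (l : EReal)} := by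
  obtain ⟨-, hclosed, hconv, -, h0⟩ := hT
  apply le_antisymm
  · apply sInf_le_sInf
    rintro v ⟨l, hl, hx, rfl⟩
    exact ⟨l, hl.le, subset_closure ⟨l, hl, rfl, hx⟩, rfl⟩
  · apply le_sInf
    rintro v ⟨l, hl0, hK, rfl⟩
    have key : ∀ μ : ℝ, l < μ → μ⁻¹ • x ∈ T := by
      intro μ hμ
      rw [flowCone, mem_closure_iff_seq_limit] at hK
      obtain ⟨p, hp, hlim⟩ := hK
      have hlim1 : Filter.Tendsto (fun k => (p k).1) Filter.atTop (𝓝 x) :=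
        (continuous_fst.tendsto _).comp hlim
      have hlim2 : Filter.Tendsto (fun k => -(p k).2) Filter.atTop (𝓝 l) := by
        have := (continuous_snd.tendsto _).comp hlim
        simpa using this.neg
      -- eventually -(p k).2 < μ
      have hev : ∀ᶠ k in Filter.atTop, -(p k).2 < μ :=
        Filter.Tendsto.eventually_lt_const hμ hlim2
      have hμpos : 0 < μ := lt_of_le_of_lt hl0 hμ
      have hmem : ∀ᶠ k in Filter.atTop, μ⁻¹ • (p k).1 ∈ T := by
        filter_upwards [hev] with k hk
        obtain ⟨lk, hlk, h2, h3⟩ := hp k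
        have hlkμ : lk < μ := by
          have : -(p k).2 = lk := by rw [h2]; ring
          rwa [this] at hk
        have : μ⁻¹ • (p k).1 = (lk * μ⁻¹) • (lk⁻¹ • (p k).1) := by
          rw [smul_smul, mul_assoc, mul_comm μ⁻¹, ← mul_assoc,
            mul_inv_cancel₀ hlk.ne', one_mul]
        rw [this]
        exact hconv.smul_mem_of_zero_mem h0 h3
          ⟨by positivity, by
            have : lk / μ ≤ 1 := by rw [div_le_one hμpos]; exact hlkμ.le
            simpa [div_eq_mul_inv] using this⟩
      have htend : Filter.Tendsto (fun k => μ⁻¹ • (p k).1) Filter.atTop (𝓝 (μ⁻¹ • x)) :=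
        hlim1.const_smul _
      exact hclosed.mem_of_tendsto htend hmem
    by_contra h
    push_neg at h
    obtain ⟨μ, hμ1, hμ2⟩ := EReal.lt_iff_exists_real_btwn.mp h
    have hlμ : l < μ := by exact_mod_cast hμ1
    have : sInf {v : EReal | ∃ l : ℝ, 0 < l ∧ l⁻¹ • x ∈ T ∧ v = (l : EReal)} ≤ (μ : EReal) :=
      sInf_le ⟨μ, lt_of_le_of_lt hl0 hlμ, key μ hlμ, rfl⟩
    exact absurd (lt_of_le_of_lt this hμ2) (lt_irrefl _)
end

section
/- Let T ⊆ ℝ^k be an allowable flow set that is bounded above, and let A ∈ ℝ^{p×k} be a matrix with nonnegative entries and trivial null space (Ax = 0 implies x = 0). Then the downward closure of the image, A T − ℝ^p_+ = {y ∈ ℝ^p : y ≤ Ax componentwise for some x ∈ T}, is an allowable flow set in ℝ^p; in particular it is closed, convex, downward closed, and contains the zero vector. -/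
/-- if `T ⊆ ℝ^k` is an allowable flow set that is bounded above
and `A ∈ ℝ^{p×k}` has nonnegative entries and trivial null space, then the
downward closure of the image, `A T − ℝ^p_+ = {y : y ≤ A x for some x ∈ T}`,
is an allowable flow set in `ℝ^p`. -/
theorem image_downward_closure_isAllowable
    (p k : ℕ) (T : Set (Fin k → ℝ)) (hT : IsAllowableFlowSet T)
    (hbdd : ∃ b : ℝ, ∀ x ∈ T, ∀ j, x j ≤ b)
    (A : Matrix (Fin p) (Fin k) ℝ)
    (hA : ∀ i j, 0 ≤ A i j)
    (hker : ∀ x : Fin k → ℝ, A.mulVec x = 0 → x = 0) :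
    IsAllowableFlowSet {y : Fin p → ℝ | ∃ x ∈ T, y ≤ A.mulVec x} := by
  obtain ⟨hne, hclosed, hconv, hdown, hzero⟩ := hT
  obtain ⟨b, hb⟩ := hbdd
  -- zero is in the set
  have h0 : (0 : Fin p → ℝ) ∈ {y : Fin p → ℝ | ∃ x ∈ T, y ≤ A.mulVec x} := by
    refine ⟨0, hzero, ?_⟩
    simp [Matrix.mulVec_zero]
  -- every column has a positive entry
  have hcol : ∀ j, ∃ i, 0 < A i j := by
    intro j
    by_contra h
    push_neg at h
    have hz : ∀ i, A i j = 0 := fun i => le_antisymm (h i) (hA i j)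
    have : A.mulVec (Pi.single j 1) = 0 := by
      funext i
      simp [Matrix.mulVec, dotProduct, Pi.single_apply, hz]
    have := congrFun (hker _ this) j
    simp at this
  choose r hr using hcol
  refine ⟨⟨0, h0⟩, ?_, ?_, ?_, h0⟩
  · -- closed
    apply IsSeqClosed.isClosed
    intro y u hy hyu
    choose x hxT hxle using hy
    -- lower bounds for y
    have hmb : ∀ i, ∃ mi : ℝ, ∀ n, mi ≤ y n i := by
      intro i
      have : Filter.Tendsto (fun n => y n i) Filter.atTop (nhds (u i)) :=
        (continuous_apply i).continuousAt.tendsto.comp hyu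
      obtain ⟨mi, hmi⟩ := this.bddBelow_range
      exact ⟨mi, fun n => hmi ⟨n, rfl⟩⟩
    choose m hm using hmb
    set b' := max b 0 with hb'
    set S : Fin p → ℝ := fun i => ∑ l, A i l * b' with hS
    set c : Fin k → ℝ := fun j => (m (r j) - S (r j)) / A (r j) j with hc
    have hxmem : ∀ n, x n ∈ Set.Icc c (fun _ => b') ∩ T := by
      intro n
      refine ⟨⟨fun j => ?_, fun j => le_trans (hb _ (hxT n) j) (le_max_left _ _)⟩, hxT n⟩
      have hpos := hr j
      rw [hc]
      rw [div_le_iff₀ hpos]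
      have key : A (r j) j * x n j ≥ y n (r j) - ∑ l ∈ Finset.univ.erase j, A (r j) l * x n l := by
        have h1 : y n (r j) ≤ A.mulVec (x n) (r j) := hxle n (r j)
        have h2 : A.mulVec (x n) (r j) =
            A (r j) j * x n j + ∑ l ∈ Finset.univ.erase j, A (r j) l * x n l := by
          rw [Matrix.mulVec, dotProduct]
          exact (Finset.add_sum_erase _ _ (Finset.mem_univ j)).symm
        linarith [h1, h2.symm.le]
      have herase : ∑ l ∈ Finset.univ.erase j, A (r j) l * x n l ≤ S (r j) := by
        rw [hS]
        refine le_trans (Finset.sum_le_sum fun l _ => ?_)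
          (Finset.sum_le_sum_of_subset_of_nonneg (Finset.erase_subset _ _)
            (fun l _ _ => mul_nonneg (hA _ _) (le_max_right _ _)))
        exact mul_le_mul_of_nonneg_left (le_trans (hb _ (hxT n) l) (le_max_left _ _)) (hA _ _)
      have := hm (r j) n
      nlinarith [key, herase]
    have hcmp : IsCompact (Set.Icc c (fun _ => b') ∩ T) :=
      isCompact_Icc.inter_right hclosed
    obtain ⟨a, ⟨_, haT⟩, φ, hφ, hlim⟩ := hcmp.tendsto_subseq hxmem
    refine ⟨a, haT, fun i => ?_⟩
    have hyi : Filter.Tendsto (fun n => y (φ n) i) Filter.atTop (nhds (u i)) :=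
      ((continuous_apply i).continuousAt.tendsto.comp hyu).comp hφ.tendsto_atTop
    have hAx : Filter.Tendsto (fun n => A.mulVec (x (φ n)) i) Filter.atTop
        (nhds (A.mulVec a i)) := by
      simp only [Matrix.mulVec, dotProduct]
      exact tendsto_finset_sum _ fun l _ =>
        ((continuous_apply l).continuousAt.tendsto.comp hlim).const_mul _
    exact le_of_tendsto_of_tendsto' hyi hAx fun n => hxle (φ n) i
  · -- convex
    rintro y₁ ⟨x₁, hx₁, hle₁⟩ y₂ ⟨x₂, hx₂, hle₂⟩ s t hs ht hst
    refine ⟨s • x₁ + t • x₂, hconv hx₁ hx₂ hs ht hst, fun i => ?_⟩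
    have : A.mulVec (s • x₁ + t • x₂) = s • A.mulVec x₁ + t • A.mulVec x₂ := by
      rw [Matrix.mulVec_add, Matrix.mulVec_smul, Matrix.mulVec_smul]
    rw [this]
    exact add_le_add (mul_le_mul_of_nonneg_left (hle₁ i) hs)
      (mul_le_mul_of_nonneg_left (hle₂ i) ht)
  · -- downward closed
    rintro y ⟨x, hx, hle⟩ y' hy'
    exact ⟨x, hx, le_trans hy' hle⟩
end

section
/- Let A ∈ ℝ^{p×k} be a selector matrix (p ≥ k) and let T ⊆ ℝ^k be an allowable flow set. Then the lifted set A T − ℝ^p_+ = {y ∈ ℝ^p : y ≤ Ax componentwise for some x ∈ T} is an allowable flow set in ℝ^p. -/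
/-- A selector matrix: each column is a standard unit basis vector, and the
columns are distinct. -/
def IsSelectorMatrix {p k : ℕ} (A : Matrix (Fin p) (Fin k) ℝ) : Prop :=
  ∃ f : Fin k → Fin p, Function.Injective f ∧
    ∀ i j, A i j = if i = f j then 1 else 0

/-- if `A ∈ ℝ^{p×k}` is a selector matrix and `T ⊆ ℝ^k` is an
allowable flow set, then the lifted set `A T − ℝ^p_+` is an allowable flow set
in `ℝ^p`. -/
theorem lifted_set_isAllowable
    (p k : ℕ) (A : Matrix (Fin p) (Fin k) ℝ) (hA : IsSelectorMatrix A)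
    (T : Set (Fin k → ℝ)) (hT : IsAllowableFlowSet T) :
    IsAllowableFlowSet {y : Fin p → ℝ | ∃ x ∈ T, y ≤ A.mulVec x} := by
  obtain ⟨f, hfinj, hAf⟩ := hA
  obtain ⟨hne, hcl, hconv, hdown, hzero⟩ := hT
  have key1 : ∀ (x : Fin k → ℝ) (j : Fin k), A.mulVec x (f j) = x j := by
    intro x j
    simp only [Matrix.mulVec, dotProduct, hAf]
    rw [Finset.sum_eq_single j]
    · simp
    · intro b _ hb
      rw [if_neg (fun h => hb (hfinj h.symm)), zero_mul]
    · simp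
  have key2 : ∀ (x : Fin k → ℝ) (i : Fin p), i ∉ Set.range f → A.mulVec x i = 0 := by
    intro x i hi
    simp only [Matrix.mulVec, dotProduct, hAf]
    apply Finset.sum_eq_zero
    intro j _
    rw [if_neg (fun h => hi ⟨j, h.symm⟩), zero_mul]
  have hchar : {y : Fin p → ℝ | ∃ x ∈ T, y ≤ A.mulVec x}
      = {y : Fin p → ℝ | (fun j => y (f j)) ∈ T ∧ ∀ i ∉ Set.range f, y i ≤ 0} := by
    ext y
    constructor
    · rintro ⟨x, hx, hyx⟩
      refine ⟨hdown x hx _ fun j => ?_, fun i hi => ?_⟩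
      · simpa [key1] using hyx (f j)
      · simpa [key2 x i hi] using hyx i
    · rintro ⟨h1, h2⟩
      refine ⟨fun j => y (f j), h1, fun i => ?_⟩
      by_cases hi : i ∈ Set.range f
      · obtain ⟨j, rfl⟩ := hi
        rw [key1]
      · rw [key2 _ i hi]
        exact h2 i hi
  rw [hchar]
  refine ⟨⟨0, by simpa [Pi.zero_def] using hzero⟩, ?_, ?_, ?_, by simpa [Pi.zero_def] using hzero⟩
  · have heq : {y : Fin p → ℝ | (fun j => y (f j)) ∈ T ∧ ∀ i ∉ Set.range f, y i ≤ 0}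
        = ((fun (y : Fin p → ℝ) j => y (f j)) ⁻¹' T) ∩
          ⋂ i, {y : Fin p → ℝ | i ∉ Set.range f → y i ≤ 0} := by
      ext y; simp [Set.mem_iInter]
    rw [heq]
    refine IsClosed.inter (hcl.preimage (continuous_pi fun j => continuous_apply (f j)))
      (isClosed_iInter fun i => ?_)
    by_cases hi : i ∈ Set.range f
    · have : {y : Fin p → ℝ | i ∉ Set.range f → y i ≤ 0} = Set.univ := by
        ext y; simp [hi]
      rw [this]; exact isClosed_univ
    · have : {y : Fin p → ℝ | i ∉ Set.range f → y i ≤ 0} = {y | y i ≤ 0} := by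
        ext y; simp [hi]
      rw [this]
      exact isClosed_le (continuous_apply i) continuous_const
  · rintro y ⟨hy1, hy2⟩ z ⟨hz1, hz2⟩ a b ha hb hab
    refine ⟨?_, fun i hi => ?_⟩
    · have := hconv hy1 hz1 ha hb hab
      convert this using 1
      funext j; simp
    · have : (a • y + b • z) i = a * y i + b * z i := by simp
      rw [this]
      have h1 : a * y i ≤ 0 := mul_nonpos_of_nonneg_of_nonpos ha (hy2 i hi)
      have h2 : b * z i ≤ 0 := mul_nonpos_of_nonneg_of_nonpos hb (hz2 i hi)
      linarith
  · rintro y ⟨hy1, hy2⟩ y' hy'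
    exact ⟨hdown _ hy1 _ fun j => hy' (f j), fun i hi => le_trans (hy' i) (hy2 i hi)⟩
end

section
/- Let T, T̃ ⊆ ℝ^n be allowable flow sets, each of which is bounded above. Then their Minkowski sum T + T̃ = {x + x̃ : x ∈ T, x̃ ∈ T̃} is an allowable flow set in ℝ^n; in particular it is closed, convex, downward closed, and contains the zero vector. -/
/-- the Minkowski sum of two allowable flow sets, each bounded
above, is an allowable flow set. -/
theorem minkowski_sum_isAllowable
    (n : ℕ) (T T' : Set (Fin n → ℝ))
    (hT : IsAllowableFlowSet T) (hT' : IsAllowableFlowSet T')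
    (hbdd : ∃ b : ℝ, ∀ x ∈ T, ∀ j, x j ≤ b)
    (hbdd' : ∃ b : ℝ, ∀ x ∈ T', ∀ j, x j ≤ b) :
    IsAllowableFlowSet {z : Fin n → ℝ | ∃ x ∈ T, ∃ x' ∈ T', z = x + x'} := by
  obtain ⟨hne, hcl, hcx, hdc, h0⟩ := hT
  obtain ⟨hne', hcl', hcx', hdc', h0'⟩ := hT'
  obtain ⟨b, hb⟩ := hbdd
  obtain ⟨b', hb'⟩ := hbdd'
  refine ⟨⟨0, 0, h0, 0, h0', by simp⟩, ?_, ?_, ?_, ⟨0, h0, 0, h0', by simp⟩⟩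
  · -- closed
    apply isClosed_of_closure_subset
    intro z hz
    rw [mem_closure_iff_seq_limit] at hz
    obtain ⟨u, hu, hlim⟩ := hz
    choose x hxT y hyT hxy using hu
    -- z_k is bounded, so x_k is bounded below, hence bounded
    have hbz : Bornology.IsBounded (Set.range u) := Metric.isBounded_range_of_tendsto u hlim
    obtain ⟨C, hC⟩ := hbz.exists_norm_le
    have hxbound : ∀ k, ‖x k‖ ≤ max |b| (C + |b'|) := by
      intro k
      have hCk : ‖u k‖ ≤ C := hC _ (Set.mem_range_self k)
      rw [pi_norm_le_iff_of_nonneg (le_max_iff.mpr (Or.inl (abs_nonneg b)))]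
      intro j
      rw [Real.norm_eq_abs, abs_le]
      constructor
      · have h1 : x k j = u k j - y k j := by
          have := congrFun (hxy k) j; simp at this; linarith
        have h2 : |u k j| ≤ C := le_trans (norm_le_pi_norm (u k) j) hCk
        have h3 : y k j ≤ b' := hb' _ (hyT k) j
        have := abs_le.mp h2
        have hb'abs := le_abs_self b'
        have : x k j ≥ -(C + |b'|) := by rw [h1]; linarith
        calc -(max |b| (C + |b'|)) ≤ -(C + |b'|) := neg_le_neg (le_max_right _ _)
          _ ≤ x k j := this
      · calc x k j ≤ b := hb _ (hxT k) j
          _ ≤ |b| := le_abs_self b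
          _ ≤ max |b| (C + |b'|) := le_max_left _ _
    -- extract convergent subsequence of x
    have hxb : Bornology.IsBounded (Set.range x) := by
      rw [isBounded_iff_forall_norm_le]
      exact ⟨_, fun w ⟨k, hk⟩ => hk ▸ hxbound k⟩
    obtain ⟨a, -, φ, hφ, hconv⟩ :=
      tendsto_subseq_of_bounded hxb (fun k => Set.mem_range_self k)
    have haT : a ∈ T := hcl.mem_of_tendsto hconv (Filter.Eventually.of_forall fun k => hxT _)
    have hyconv : Filter.Tendsto (fun k => y (φ k)) Filter.atTop (nhds (z - a)) := by
      have : (fun k => y (φ k)) = fun k => u (φ k) - x (φ k) := by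
        funext k; have := hxy (φ k); rw [this]; abel
      rw [this]
      exact ((hlim.comp hφ.tendsto_atTop).sub hconv)
    have hyT' : z - a ∈ T' :=
      hcl'.mem_of_tendsto hyconv (Filter.Eventually.of_forall fun k => hyT _)
    exact ⟨a, haT, z - a, hyT', by abel⟩
  · -- convex
    rintro z ⟨x, hx, y, hy, rfl⟩ w ⟨x', hx', y', hy', rfl⟩ s t hs ht hst
    exact ⟨s • x + t • x', hcx hx hx' hs ht hst,
           s • y + t • y', hcx' hy hy' hs ht hst, by module⟩
  · -- downward closed
    rintro z ⟨x, hx, y, hy, rfl⟩ z' hz'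
    refine ⟨z' - y, hdc x hx _ (fun j => ?_), y, hy, by abel⟩
    have := hz' j
    simp only [Pi.add_apply] at this
    simp only [Pi.sub_apply]
    linarith
end

section
/- (Shapley–Folkman lemma.) Let S_1, …, S_m ⊆ ℝ^d be arbitrary subsets of ℝ^d and suppose y = x_1 + ⋯ + x_m where x_i ∈ conv(S_i) for each i = 1, …, m. Then there exist x̃_1, …, x̃_m with x̃_i ∈ conv(S_i) for every i, such that y = x̃_1 + ⋯ + x̃_m and the number of indices i with x̃_i ∉ S_i is at most d. -/
open Finset

lemma sf_reduce {ι E : Type*} [Fintype ι] [AddCommGroup E] [Module ℝ E]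
    (v : ι → E) (c g : ι → ℝ) (hc : ∀ i, 0 ≤ c i)
    (hsupp : ∀ i, g i ≠ 0 → c i ≠ 0) (hg0 : ∑ i, g i • v i = 0)
    (i₁ : ι) (hi₁ : 0 < g i₁) :
    ∃ c' : ι → ℝ, (∀ i, 0 ≤ c' i) ∧ ∑ i, c' i • v i = ∑ i, c i • v i ∧
      (Finset.univ.filter (fun i => c' i ≠ 0)) ⊂
        (Finset.univ.filter (fun i => c i ≠ 0)) := by
  classical
  set P : Finset ι := Finset.univ.filter (fun i => 0 < g i) with hP
  obtain ⟨i₀, hi₀P, hmin⟩ := P.exists_min_image (fun i => c i / g i)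
    ⟨i₁, by simp [hP, hi₁]⟩
  have hgi₀ : 0 < g i₀ := by simpa [hP] using hi₀P
  set t : ℝ := c i₀ / g i₀ with ht
  have ht0 : 0 ≤ t := div_nonneg (hc i₀) hgi₀.le
  refine ⟨fun i => c i - t * g i, ?_, ?_, ?_⟩
  · intro i
    dsimp only
    rw [sub_nonneg]
    by_cases hgi : 0 < g i
    · have := hmin i (by simp [hP, hgi])
      have : t * g i ≤ c i := by
        rw [ht]
        calc c i₀ / g i₀ * g i ≤ c i / g i * g i := by
              exact mul_le_mul_of_nonneg_right this hgi.le
          _ = c i := div_mul_cancel₀ _ hgi.ne'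
      exact this
    · push_neg at hgi
      nlinarith [hc i]
  · simp only [sub_smul, Finset.sum_sub_distrib, mul_smul, ← Finset.smul_sum, hg0,
      smul_zero, sub_zero]
  · constructor
    · intro i hi
      simp only [Finset.mem_filter, Finset.mem_univ, true_and] at hi ⊢
      intro hci
      apply hi
      have : g i = 0 := by
        by_contra h; exact hsupp i h hci
      simp [hci, this]
    · intro hsub
      have hi₀mem : i₀ ∈ Finset.univ.filter (fun i => c i ≠ 0) := by
        simp only [Finset.mem_filter, Finset.mem_univ, true_and]
        exact hsupp i₀ hgi₀.ne'
      have := hsub hi₀mem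
      simp only [Finset.mem_filter, Finset.mem_univ, true_and, ht] at this
      apply this
      field_simp
      simp

lemma sf_conical {ι E : Type*} [Fintype ι] [AddCommGroup E] [Module ℝ E]
    (v : ι → E) (c : ι → ℝ) (hc : ∀ i, 0 ≤ c i) :
    ∃ c' : ι → ℝ, (∀ i, 0 ≤ c' i) ∧ ∑ i, c' i • v i = ∑ i, c i • v i ∧
      LinearIndependent ℝ (fun i : {i // c' i ≠ 0} => v i) := by
  classical
  generalize hn : (Finset.univ.filter (fun i => c i ≠ 0)).card = n
  induction n using Nat.strong_induction_on generalizing c with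
  | _ n ih =>
  subst hn
  by_cases hli : LinearIndependent ℝ (fun i : {i // c i ≠ 0} => v i)
  · exact ⟨c, hc, rfl, hli⟩
  rw [Fintype.not_linearIndependent_iff] at hli
  obtain ⟨g, hgsum, i₁, hgi₁⟩ := hli
  set g' : ι → ℝ := fun i => if h : c i = 0 then 0 else g ⟨i, h⟩ with hg'
  have hsupp : ∀ i, g' i ≠ 0 → c i ≠ 0 := by
    intro i hi
    by_contra h
    simp [hg', h] at hi
  have hcoe : ∀ i : {i // c i ≠ 0}, g' (i : ι) = g i := by
    intro i
    simp [hg', dif_neg i.2]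
  have hg'sum : ∑ i, g' i • v i = 0 := by
    have h1 : ∑ i ∈ Finset.univ.filter (fun i => c i ≠ 0), g' i • v i
        = ∑ i, g' i • v i := by
      apply Finset.sum_filter_of_ne
      intro i _ h
      exact hsupp i (fun hz => h (by rw [hz, zero_smul]))
    have h2 : ∑ i ∈ Finset.univ.filter (fun i => c i ≠ 0), g' i • v i
        = ∑ i : {i // c i ≠ 0}, g' (i : ι) • v (i : ι) := by
      apply Finset.sum_subtype
      simp
    rw [← h1, h2, ← hgsum]
    exact Finset.sum_congr rfl (fun i _ => by rw [hcoe])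
  have hgi₁' : g' (i₁ : ι) ≠ 0 := by rw [hcoe]; exact hgi₁
  have key : ∃ c'' : ι → ℝ, (∀ i, 0 ≤ c'' i) ∧
      (∑ i, c'' i • v i = ∑ i, c i • v i) ∧
      (Finset.univ.filter (fun i => c'' i ≠ 0)) ⊂
        (Finset.univ.filter (fun i => c i ≠ 0)) := by
    rcases lt_or_gt_of_ne hgi₁' with h | h
    · have := sf_reduce v c (-g') hc
        (fun i hi => hsupp i (by simpa [neg_ne_zero] using hi))
        (by simp [hg'sum]) i₁ (by simpa using h)
      simpa using this
    · exact sf_reduce v c g' hc hsupp hg'sum i₁ h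
  obtain ⟨c'', hc''0, hc''sum, hlt⟩ := key
  obtain ⟨c', h1, h2, h3⟩ := ih _ (Finset.card_lt_card hlt) c'' hc''0 rfl
  exact ⟨c', h1, h2.trans hc''sum, h3⟩


/-- Shapley–Folkman lemma: if `y = x_1 + ⋯ + x_m` with
`x_i ∈ conv(S_i)` for arbitrary subsets `S_1, …, S_m ⊆ ℝ^d`, then there exist
`x̃_i ∈ conv(S_i)` summing to `y` such that `x̃_i ∉ S_i` for at most `d`
indices `i`. -/
theorem shapley_folkman
    (d m : ℕ) (S : Fin m → Set (Fin d → ℝ))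
    (x : Fin m → Fin d → ℝ) (hx : ∀ i, x i ∈ convexHull ℝ (S i))
    (y : Fin d → ℝ) (hy : y = ∑ i, x i) :
    ∃ xt : Fin m → Fin d → ℝ,
      (∀ i, xt i ∈ convexHull ℝ (S i)) ∧
      y = ∑ i, xt i ∧
      {i : Fin m | xt i ∉ S i}.ncard ≤ d := by
  classical
  choose ι fι z w hzrange hind hwpos hwsum hwcomb using
    fun i => eq_pos_convex_span_of_mem_convexHull (hx i)
  letI : ∀ i, Fintype (ι i) := fι
  set κ := Σ i : Fin m, ι i with hκ
  set v : κ → (Fin d → ℝ) × (Fin m → ℝ) := fun p => (z p.1 p.2, Pi.single p.1 1) with hv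
  set c : κ → ℝ := fun p => w p.1 p.2 with hc
  obtain ⟨c', hc'0, hc'sum, hli⟩ := sf_conical v c (fun p => (hwpos p.1 p.2).le)
  -- decompose sums over the sigma type
  have hsigma : ∀ (f : κ → ℝ) (G : κ → Fin d → ℝ),
      True := fun _ _ => trivial
  have hsum1 : (∑ p : κ, c' p • v p).1 = ∑ i, ∑ j, c' ⟨i, j⟩ • z i j := by
    rw [Prod.fst_sum, ← Finset.univ_sigma_univ, Finset.sum_sigma]
    rfl
  have hsum2 : ∀ k, (∑ p : κ, c' p • v p).2 k = ∑ j, c' ⟨k, j⟩ := by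
    intro k
    rw [Prod.snd_sum, ← Finset.univ_sigma_univ, Finset.sum_sigma, Finset.sum_apply]
    simp only [Finset.sum_apply, hv, Prod.smul_mk, Pi.smul_apply, Pi.single_apply,
      smul_eq_mul, mul_ite, mul_one, mul_zero, Finset.sum_ite_irrel,
      Finset.sum_const_zero, Finset.sum_ite_eq, Finset.mem_univ, if_true]
  -- the right-hand side of hc'sum
  have hrsum1 : (∑ p : κ, c p • v p).1 = ∑ i, x i := by
    rw [Prod.fst_sum, ← Finset.univ_sigma_univ, Finset.sum_sigma]
    exact Finset.sum_congr rfl fun i _ => hwcomb i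
  have hrsum2 : ∀ k, (∑ p : κ, c p • v p).2 k = 1 := by
    intro k
    rw [Prod.snd_sum, ← Finset.univ_sigma_univ, Finset.sum_sigma, Finset.sum_apply]
    simp only [Finset.sum_apply, hv, hc, Prod.smul_mk, Pi.smul_apply, Pi.single_apply,
      smul_eq_mul, mul_ite, mul_one, mul_zero, Finset.sum_ite_irrel,
      Finset.sum_const_zero, Finset.sum_ite_eq, Finset.mem_univ, if_true]
    exact hwsum k
  -- row sums of c' are 1
  have hrow : ∀ k, ∑ j, c' ⟨k, j⟩ = 1 := by
    intro k
    rw [← hsum2 k, hc'sum, hrsum2 k]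
  set xt : Fin m → Fin d → ℝ := fun i => ∑ j, c' ⟨i, j⟩ • z i j with hxt
  -- membership in convex hulls
  have hmem : ∀ i, xt i ∈ convexHull ℝ (S i) := by
    intro i
    apply (convex_convexHull ℝ (S i)).sum_mem
    · exact fun j _ => hc'0 ⟨i, j⟩
    · exact hrow i
    · exact fun j _ => subset_convexHull ℝ (S i) (hzrange i ⟨j, rfl⟩)
  -- the sum is y
  have hsumy : y = ∑ i, xt i := by
    rw [hy, ← hrsum1, ← hc'sum, hsum1]
  -- cardinality bound
  set N : ∀ i : Fin m, Finset (ι i) := fun i => Finset.univ.filter (fun j => c' ⟨i, j⟩ ≠ 0)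
    with hN
  have hTcard : ∑ i, (N i).card ≤ d + m := by
    have hT : Finset.univ.sigma N = Finset.univ.filter (fun p : κ => c' p ≠ 0) := by
      ext ⟨i, j⟩
      simp [hN]
    have h1 : (Finset.univ.sigma N).card = Fintype.card {p : κ // c' p ≠ 0} := by
      rw [hT, Fintype.card_subtype]
    have h2 : Fintype.card {p : κ // c' p ≠ 0} ≤
        Module.finrank ℝ ((Fin d → ℝ) × (Fin m → ℝ)) :=
      hli.fintype_card_le_finrank
    have h3 : Module.finrank ℝ ((Fin d → ℝ) × (Fin m → ℝ)) = d + m := by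
      rw [Module.finrank_prod, Module.finrank_pi, Module.finrank_pi]
      simp
    rw [← Finset.card_sigma, h1]
    omega
  have hNne : ∀ i, 1 ≤ (N i).card := by
    intro i
    rw [Nat.one_le_iff_ne_zero, ← Nat.pos_iff_ne_zero, Finset.card_pos]
    by_contra h
    rw [Finset.not_nonempty_iff_eq_empty] at h
    have : ∑ j, c' ⟨i, j⟩ = 0 := by
      apply Finset.sum_eq_zero
      intro j _
      by_contra hj
      have : j ∈ N i := by simp [hN, hj]
      simp [h] at this
    rw [hrow i] at this
    norm_num at this
  set B : Finset (Fin m) := Finset.univ.filter (fun i => 2 ≤ (N i).card) with hB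
  have hBcard : B.card ≤ d := by
    have : m + B.card ≤ ∑ i, (N i).card := by
      have : ∑ i, (1 + if 2 ≤ (N i).card then 1 else 0) ≤ ∑ i, (N i).card := by
        apply Finset.sum_le_sum
        intro i _
        have := hNne i
        split_ifs <;> omega
      calc m + B.card = ∑ _i : Fin m, 1 + ∑ i, (if 2 ≤ (N i).card then 1 else 0) := by
            rw [Finset.sum_const, smul_eq_mul, mul_one, Finset.card_eq_sum_ones B, hB,
              Finset.sum_filter]
            simp
        _ = ∑ i, (1 + if 2 ≤ (N i).card then 1 else 0) := (Finset.sum_add_distrib).symm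
        _ ≤ ∑ i, (N i).card := this
    omega
  -- indices outside B are good
  have hgood : {i : Fin m | xt i ∉ S i} ⊆ ↑B := by
    intro i hi
    simp only [Set.mem_setOf_eq] at hi
    by_contra hiB
    apply hi
    have hcard1 : (N i).card = 1 := by
      have : ¬ 2 ≤ (N i).card := by
        intro h
        exact hiB (by simp [hB, h])
      have := hNne i
      omega
    obtain ⟨j₀, hj₀⟩ := Finset.card_eq_one.mp hcard1
    have hzero : ∀ j, j ≠ j₀ → c' ⟨i, j⟩ = 0 := by
      intro j hj
      by_contra h
      have : j ∈ N i := by simp [hN, h]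
      rw [hj₀, Finset.mem_singleton] at this
      exact hj this
    have hone : c' ⟨i, j₀⟩ = 1 := by
      rw [← hrow i]
      exact (Finset.sum_eq_single j₀ (fun b _ hb => hzero b hb)
        (fun h => absurd (Finset.mem_univ j₀) h)).symm
    have : xt i = z i j₀ := by
      have h1 : xt i = ∑ j, c' ⟨i, j⟩ • z i j := rfl
      rw [h1, Finset.sum_eq_single j₀
        (fun b _ hb => by rw [hzero b hb, zero_smul])
        (fun h => absurd (Finset.mem_univ j₀) h), hone, one_smul]
    rw [this]
    exact hzrange i ⟨j₀, rfl⟩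
  refine ⟨xt, hmem, hsumy, ?_⟩
  calc {i : Fin m | xt i ∉ S i}.ncard ≤ (↑B : Set (Fin m)).ncard :=
        Set.ncard_le_ncard hgood (B : Set (Fin m)).toFinite
    _ = B.card := Set.ncard_coe_finset B
    _ ≤ d := hBcard
end

section
/- Let T_i ⊆ ℝ^{n_i} be allowable flow sets with flow cones K_i, let A_i ∈ ℝ^{n×n_i} be selector matrices, let q ∈ ℝ^m with q ≥ 0, and let Q_i = {0} ∪ (T_i × {−1}) ⊆ ℝ^{n_i+1}. Suppose (x_i, λ_i) ∈ conv(Q_i) for i = 1, …, m, and set y = Σ_{i=1}^m A_i x_i and c = Σ_{i=1}^m q_i λ_i. Then there exist (x_i⁰, λ_i⁰) ∈ Q_i for i = 1, …, m such that Σ_{i=1}^m A_i x_i⁰ = y and Σ_{i=1}^m q_i λ_i⁰ ≥ c − (n+1) · max_i q_i. -/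
open Finset
open scoped Classical

/-- Core Shapley–Folkman exchange induction. -/
lemma sf_aux {V : Type*} [AddCommGroup V] [Module ℝ V] [FiniteDimensional ℝ V]
    {m : ℕ} (S : Fin m → Set V) (N : ℕ) :
    ∀ (t : Fin m → Finset V) (w : Fin m → V → ℝ),
      (∑ i, (t i).card) ≤ N →
      (∀ i, ↑(t i) ⊆ S i) →
      (∀ i, ∀ z ∈ t i, 0 < w i z) →
      (∀ i, ∑ z ∈ t i, w i z = 1) →
      ∃ u : Fin m → V,
        (∀ i, u i ∈ convexHull ℝ (S i)) ∧
        (∑ i, u i) = (∑ i, ∑ z ∈ t i, w i z • z) ∧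
        (Finset.univ.filter (fun i => u i ∉ S i)).card ≤ Module.finrank ℝ V := by
  induction N using Nat.strong_induction_on with
  | _ N ih =>
  intro t w hN hS hpos hsum
  by_cases hk : (univ.filter (fun i => 2 ≤ (t i).card)).card ≤ Module.finrank ℝ V
  · -- few fractional blocks: take barycenters
    refine ⟨fun i => ∑ z ∈ t i, w i z • z, ?_, rfl, ?_⟩
    · intro i
      have h := Finset.centerMass_mem_convexHull (t i)
        (fun z hz => (hpos i z hz).le) (by rw [hsum i]; norm_num)
        (fun z hz => hS i hz)
      rwa [Finset.centerMass_eq_of_sum_1 _ _ (hsum i)] at h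
    · refine le_trans (Finset.card_le_card ?_) hk
      intro i hi
      simp only [mem_filter, mem_univ, true_and] at hi ⊢
      by_contra hcard
      push_neg at hcard
      -- card ≤ 1, and nonempty since weights sum to 1
      have hne : (t i).Nonempty := by
        rcases Finset.eq_empty_or_nonempty (t i) with h | h
        · exfalso; have := hsum i; rw [h] at this; simp at this
        · exact h
      have hcard1 : (t i).card = 1 := by
        have := Finset.card_pos.mpr hne; omega
      obtain ⟨a, ha⟩ := Finset.card_eq_one.mp hcard1
      apply hi
      have hw1 : w i a = 1 := by have := hsum i; rwa [ha, Finset.sum_singleton] at this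
      rw [ha, Finset.sum_singleton, hw1, one_smul]
      exact hS i (by rw [ha]; exact Finset.mem_singleton_self a)
  · push_neg at hk
    set F : Finset (Fin m) := univ.filter (fun i => 2 ≤ (t i).card) with hFdef
    -- pick two distinct atoms in each fractional block
    have hpick : ∀ i : Fin m, ∃ pr : V × V, 2 ≤ (t i).card →
        pr.1 ∈ t i ∧ pr.2 ∈ t i ∧ pr.1 ≠ pr.2 := by
      intro i
      by_cases h : 2 ≤ (t i).card
      · obtain ⟨a, ha, b, hb, hab⟩ := Finset.one_lt_card.mp h
        exact ⟨(a, b), fun _ => ⟨ha, hb, hab⟩⟩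
      · exact ⟨(0, 0), fun h2 => absurd h2 h⟩
    choose pr hpr using hpick
    set z1 : Fin m → V := fun i => (pr i).1 with hz1
    set z2 : Fin m → V := fun i => (pr i).2 with hz2
    have hmemF : ∀ i ∈ F, z1 i ∈ t i ∧ z2 i ∈ t i ∧ z1 i ≠ z2 i := by
      intro i hi
      exact hpr i (by simpa [hFdef] using hi)
    -- linear dependence
    have hdep : ¬ LinearIndependent ℝ (fun i : {i // i ∈ F} => z1 i.1 - z2 i.1) := by
      intro h
      have := h.fintype_card_le_finrank
      rw [Fintype.card_coe] at this
      omega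
    obtain ⟨c, hc0, j, hcj⟩ := Fintype.not_linearIndependent_iff.mp hdep
    set c' : Fin m → ℝ := fun i => if h : i ∈ F then c ⟨i, h⟩ else 0 with hc'def
    have hc'F : ∀ i ∉ F, c' i = 0 := by intro i hi; simp [hc'def, hi]
    have hc'j : c' j.1 ≠ 0 := by simpa [hc'def, j.2] using hcj
    have hc'sum : ∑ i ∈ F, c' i • (z1 i - z2 i) = 0 := by
      rw [← Finset.sum_coe_sort F (fun i => c' i • (z1 i - z2 i))]
      rw [← hc0]
      exact Finset.sum_congr rfl (fun i _ => by simp [hc'def, i.2])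
    set E : Finset (Fin m) := F.filter (fun i => c' i ≠ 0) with hEdef
    have hjE : j.1 ∈ E := by simp [hEdef, j.2, hc'j]
    have hEF : ∀ i ∈ E, i ∈ F := fun i hi => (Finset.mem_filter.mp hi).1
    have hEc : ∀ i ∈ E, c' i ≠ 0 := fun i hi => (Finset.mem_filter.mp hi).2
    set r : Fin m → ℝ := fun i =>
      if 0 < c' i then w i (z2 i) / c' i else w i (z1 i) / (-c' i) with hrdef
    obtain ⟨i0, hi0E, hmin⟩ := E.exists_min_image r ⟨j.1, hjE⟩
    set ts : ℝ := r i0 with htsdef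
    have hrnn : ∀ i ∈ E, 0 ≤ r i := by
      intro i hi
      have h1 := (hmemF i (hEF i hi)).1
      have h2 := (hmemF i (hEF i hi)).2.1
      by_cases hc : 0 < c' i
      · rw [hrdef]; simp only [hc, if_true]
        exact div_nonneg (hpos i _ h2).le hc.le
      · rw [hrdef]; simp only [hc, if_false]
        refine div_nonneg (hpos i _ h1).le ?_
        rcases lt_trichotomy (c' i) 0 with h | h | h
        · linarith
        · exact absurd h (hEc i hi)
        · exact absurd h hc
    have htsnn : 0 ≤ ts := hrnn i0 hi0E
    set w' : Fin m → V → ℝ := fun i z =>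
      w i z + (if z = z1 i then ts * c' i else 0) - (if z = z2 i then ts * c' i else 0)
      with hw'def
    -- nonnegativity of new weights on t i
    have hw'nn : ∀ i, ∀ z ∈ t i, 0 ≤ w' i z := by
      intro i z hz
      by_cases hc : c' i = 0
      · simp [hw'def, hc, (hpos i z hz).le]
      have hiF : i ∈ F := by by_contra h; exact hc (hc'F i h)
      have hiE : i ∈ E := Finset.mem_filter.mpr ⟨hiF, hc⟩
      obtain ⟨h1, h2, h12⟩ := hmemF i hiF
      have hts_le : ts ≤ r i := hmin i hiE
      rcases lt_or_gt_of_ne hc with hneg | hposc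
      · -- c' i < 0 : constraint at z1
        have hri : r i = w i (z1 i) / (-c' i) := by
          rw [hrdef]; simp [not_lt.mpr hneg.le]
        rw [hri] at hts_le
        have hkey : ts * (-c' i) ≤ w i (z1 i) :=
          (le_div_iff₀ (by linarith : (0:ℝ) < -c' i)).mp hts_le
        by_cases hz1 : z = z1 i
        · subst hz1
          simp only [hw'def, if_pos, if_neg h12, ite_true, eq_self_iff_true, sub_zero]
          linarith
        · by_cases hz2 : z = z2 i
          · subst hz2
            simp only [hw'def, if_neg (Ne.symm h12), ite_true, eq_self_iff_true, zero_add, add_zero]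
            nlinarith [hpos i _ h2]
          · simp only [hw'def, if_neg hz1, if_neg hz2, sub_zero, add_zero]
            linarith [hpos i z hz]
      · -- c' i > 0 : constraint at z2
        have hri : r i = w i (z2 i) / c' i := by rw [hrdef]; simp [hposc]
        rw [hri] at hts_le
        have hkey : ts * c' i ≤ w i (z2 i) := (le_div_iff₀ hposc).mp hts_le
        by_cases hz2 : z = z2 i
        · subst hz2
          simp only [hw'def, if_neg (Ne.symm h12), ite_true, eq_self_iff_true, zero_add, add_zero]
          linarith
        · by_cases hz1 : z = z1 i
          · subst hz1
            simp only [hw'def, if_pos, if_neg h12, ite_true, eq_self_iff_true, sub_zero]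
            nlinarith [hpos i _ h1]
          · simp only [hw'def, if_neg hz1, if_neg hz2, sub_zero, add_zero]
            linarith [hpos i z hz]
    -- the entry that hits zero
    set zeta : V := if 0 < c' i0 then z2 i0 else z1 i0 with hzeta
    have hi0F : i0 ∈ F := hEF i0 hi0E
    have hi0c : c' i0 ≠ 0 := hEc i0 hi0E
    obtain ⟨h01, h02, h012⟩ := hmemF i0 hi0F
    have hzt : zeta ∈ t i0 := by
      rw [hzeta]; split_ifs <;> assumption
    have hzzero : w' i0 zeta = 0 := by
      rcases lt_or_gt_of_ne hi0c with hneg | hposc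
      · have hz : zeta = z1 i0 := by rw [hzeta, if_neg (not_lt.mpr hneg.le)]
        rw [hz]
        have hts : ts = w i0 (z1 i0) / (-c' i0) := by
          rw [htsdef, hrdef]; simp [not_lt.mpr hneg.le]
        simp only [hw'def, if_pos, if_neg h012, ite_true, eq_self_iff_true, sub_zero]
        rw [hts]
        field_simp [hi0c]
        ring
      · have hz : zeta = z2 i0 := by rw [hzeta, if_pos hposc]
        rw [hz]
        have hts : ts = w i0 (z2 i0) / c' i0 := by
          rw [htsdef, hrdef]; simp [hposc]
        simp only [hw'def, if_neg (Ne.symm h012), ite_true, eq_self_iff_true, zero_add, add_zero]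
        rw [hts]
        field_simp [hi0c]
        ring
    -- new weight sums
    have hsum' : ∀ i, ∑ z ∈ t i, w' i z = 1 := by
      intro i
      simp only [hw'def]
      rw [Finset.sum_sub_distrib, Finset.sum_add_distrib, hsum i,
        Finset.sum_ite_eq' (t i) (z1 i) (fun _ => ts * c' i),
        Finset.sum_ite_eq' (t i) (z2 i) (fun _ => ts * c' i)]
      by_cases hc : c' i = 0
      · simp [hc]
      · have hiF : i ∈ F := by by_contra h; exact hc (hc'F i h)
        obtain ⟨h1, h2, _⟩ := hmemF i hiF
        rw [if_pos h1, if_pos h2]; ring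
    -- vector sums agree
    have hvec : (∑ i, ∑ z ∈ t i, w' i z • z) = (∑ i, ∑ z ∈ t i, w i z • z) := by
      have hper : ∀ i, ∑ z ∈ t i, w' i z • z
          = (∑ z ∈ t i, w i z • z) + (ts * c' i) • (z1 i - z2 i) := by
        intro i
        by_cases hc : c' i = 0
        · simp [hw'def, hc]
        have hiF : i ∈ F := by by_contra h; exact hc (hc'F i h)
        obtain ⟨h1, h2, _⟩ := hmemF i hiF
        have : ∀ z ∈ t i, w' i z • z
            = w i z • z + (if z = z1 i then (ts * c' i) • z else 0)
              - (if z = z2 i then (ts * c' i) • z else 0) := by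
          intro z hz
          simp only [hw'def, sub_smul, add_smul, ite_smul, zero_smul]
        rw [Finset.sum_congr rfl this, Finset.sum_sub_distrib, Finset.sum_add_distrib,
          Finset.sum_ite_eq' (t i) (z1 i) (fun z => (ts * c' i) • z),
          Finset.sum_ite_eq' (t i) (z2 i) (fun z => (ts * c' i) • z),
          if_pos h1, if_pos h2, smul_sub]
        abel
      rw [Finset.sum_congr rfl (fun i _ => hper i), Finset.sum_add_distrib]
      have : ∑ i, (ts * c' i) • (z1 i - z2 i) = 0 := by
        have hz : ∀ i ∈ (univ : Finset (Fin m)), i ∉ F → (ts * c' i) • (z1 i - z2 i) = 0 := by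
          intro i _ hi; rw [hc'F i hi]; simp
        rw [← Finset.sum_subset (Finset.subset_univ F) hz]
        have : ∀ i ∈ F, (ts * c' i) • (z1 i - z2 i) = ts • (c' i • (z1 i - z2 i)) := by
          intro i _; rw [mul_smul]
        rw [Finset.sum_congr rfl this, ← Finset.smul_sum, hc'sum, smul_zero]
      rw [this, add_zero]
    -- the shrunken支 support
    set t' : Fin m → Finset V := fun i => (t i).filter (fun z => w' i z ≠ 0) with ht'def
    have ht'sub : ∀ i, t' i ⊆ t i := fun i => Finset.filter_subset _ _
    have ht'pos : ∀ i, ∀ z ∈ t' i, 0 < w' i z := by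
      intro i z hz
      rw [ht'def, Finset.mem_filter] at hz
      exact lt_of_le_of_ne (hw'nn i z hz.1) (Ne.symm hz.2)
    have ht'sum : ∀ i, ∑ z ∈ t' i, w' i z = 1 := by
      intro i
      rw [ht'def, Finset.sum_filter_ne_zero, hsum' i]
    have ht'vec : ∀ i, ∑ z ∈ t' i, w' i z • z = ∑ z ∈ t i, w' i z • z := by
      intro i
      rw [ht'def]
      exact Finset.sum_filter_of_ne (fun z hz h => by
        intro hw0; apply h; rw [hw0, zero_smul])
    have hcardlt : (∑ i, (t' i).card) < (∑ i, (t i).card) := by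
      apply Finset.sum_lt_sum (fun i _ => Finset.card_le_card (ht'sub i))
      refine ⟨i0, Finset.mem_univ i0, Finset.card_lt_card ?_⟩
      rw [Finset.ssubset_iff_of_subset (ht'sub i0)]
      refine ⟨zeta, hzt, ?_⟩
      rw [ht'def, Finset.mem_filter]
      rintro ⟨-, h⟩
      exact h hzzero
    -- recurse
    have hS' : ∀ i, ↑(t' i) ⊆ S i := fun i =>
      Set.Subset.trans (by exact_mod_cast Finset.coe_subset.mpr (ht'sub i)) (hS i)
    obtain ⟨u, hu, husum, hucard⟩ := ih (∑ i, (t' i).card)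
      (lt_of_lt_of_le hcardlt hN) t' w' le_rfl hS' ht'pos ht'sum
    refine ⟨u, hu, ?_, hucard⟩
    rw [husum, Finset.sum_congr rfl (fun i _ => ht'vec i), hvec]

/-- Shapley–Folkman: a sum of points of convex hulls can be replaced by a sum of
points that are in the hulls, all but `finrank` many being in the sets themselves. -/
lemma shapley_folkman_s12 {V : Type*} [AddCommGroup V] [Module ℝ V] [FiniteDimensional ℝ V]
    {m : ℕ} (S : Fin m → Set V) (v : Fin m → V)
    (hv : ∀ i, v i ∈ convexHull ℝ (S i)) :
    ∃ u : Fin m → V,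
      (∀ i, u i ∈ convexHull ℝ (S i)) ∧ (∑ i, u i) = (∑ i, v i) ∧
      (Finset.univ.filter (fun i => u i ∉ S i)).card ≤ Module.finrank ℝ V := by
  have hrep : ∀ i, ∃ (t : Finset V) (w : V → ℝ), ↑t ⊆ S i ∧ (∀ z ∈ t, 0 < w z) ∧
      (∑ z ∈ t, w z = 1) ∧ (∑ z ∈ t, w z • z = v i) := by
    intro i
    have h := hv i
    rw [convexHull_eq_union_convexHull_finite_subsets] at h
    simp only [Set.mem_iUnion] at h
    obtain ⟨t, hts, hmem⟩ := h
    rw [Finset.mem_convexHull'] at hmem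
    obtain ⟨w, hw0, hw1, hwv⟩ := hmem
    refine ⟨t.filter (fun z => w z ≠ 0), w, ?_, ?_, ?_, ?_⟩
    · exact Set.Subset.trans
        (by exact_mod_cast Finset.coe_subset.mpr (Finset.filter_subset _ t)) hts
    · intro z hz
      rw [Finset.mem_filter] at hz
      exact lt_of_le_of_ne (hw0 z hz.1) (Ne.symm hz.2)
    · rw [Finset.sum_filter_ne_zero, hw1]
    · rw [Finset.sum_filter_of_ne (fun z hz h => by intro hw; apply h; rw [hw, zero_smul]), hwv]
  choose t w htS hpos hsum1 hbar using hrep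
  obtain ⟨u, hu, husum, hucard⟩ :=
    sf_aux S (∑ i, (t i).card) t w le_rfl htS hpos hsum1
  exact ⟨u, hu, by rw [husum]; exact Finset.sum_congr rfl fun i _ => hbar i, hucard⟩

/-- rounding via Shapley–Folkman: given allowable flow sets
`T_i`, selector matrices `A_i`, nonnegative fees `q`, and
`Q_i = {0} ∪ (T_i × {−1})`, any point with `(x_i, λ_i) ∈ conv(Q_i)`,
`y = Σ A_i x_i`, `c = Σ q_i λ_i` can be rounded to `(x_i⁰, λ_i⁰) ∈ Q_i`
with the same net flow `y` and cost `Σ q_i λ_i⁰ ≥ c − (n+1)·max_i q_i`. -/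
theorem fixed_fee_rounding
    (n m : ℕ) (hm : 0 < m) (ni : Fin m → ℕ)
    (T : ∀ i : Fin m, Set (Fin (ni i) → ℝ))
    (hT : ∀ i, IsAllowableFlowSet (T i))
    (A : ∀ i : Fin m, Matrix (Fin n) (Fin (ni i)) ℝ)
    (hA : ∀ i, IsSelectorMatrix (A i))
    (q : Fin m → ℝ) (hq : ∀ i, 0 ≤ q i)
    (x : ∀ i : Fin m, Fin (ni i) → ℝ) (lam : Fin m → ℝ)
    (hfeas : ∀ i, (x i, lam i) ∈
      convexHull ℝ ({0} ∪ (T i) ×ˢ {(-1 : ℝ)} : Set ((Fin (ni i) → ℝ) × ℝ)))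
    (y : Fin n → ℝ) (hy : y = ∑ i, (A i).mulVec (x i))
    (c : ℝ) (hc : c = ∑ i, q i * lam i) :
    ∃ (x0 : ∀ i : Fin m, Fin (ni i) → ℝ) (lam0 : Fin m → ℝ),
      (∀ i, (x0 i, lam0 i) ∈
        ({0} ∪ (T i) ×ˢ {(-1 : ℝ)} : Set ((Fin (ni i) → ℝ) × ℝ))) ∧
      ∑ i, (A i).mulVec (x0 i) = y ∧
      ∑ i, q i * lam0 i ≥ c - (n + 1) * (⨆ i, q i) := by
  classical
  set Q : ∀ i : Fin m, Set ((Fin (ni i) → ℝ) × ℝ) :=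
    fun i => ({0} ∪ (T i) ×ˢ {(-1 : ℝ)}) with hQdef
  set Lmap : ∀ i : Fin m, ((Fin (ni i) → ℝ) × ℝ) →ₗ[ℝ] (Fin n → ℝ) × ℝ :=
    fun i => ((A i).mulVecLin).prodMap (q i • (LinearMap.id : ℝ →ₗ[ℝ] ℝ)) with hLdef
  have hLapp : ∀ i (pta : (Fin (ni i) → ℝ) × ℝ),
      Lmap i pta = ((A i).mulVec pta.1, q i * pta.2) := by
    intro i pta
    simp [hLdef, Matrix.mulVecLin_apply, smul_eq_mul]
  set S : ∀ i : Fin m, Set ((Fin n → ℝ) × ℝ) := fun i => Lmap i '' Q i with hSdef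
  set v : Fin m → (Fin n → ℝ) × ℝ := fun i => Lmap i (x i, lam i) with hvdef
  have hv : ∀ i, v i ∈ convexHull ℝ (S i) := by
    intro i
    rw [hSdef, ← LinearMap.image_convexHull]
    exact Set.mem_image_of_mem _ (hfeas i)
  have hrank : Module.finrank ℝ ((Fin n → ℝ) × ℝ) = n + 1 := by
    simp [Module.finrank_prod]
  obtain ⟨u, hu, husum, hucard⟩ := shapley_folkman_s12 S v hv
  rw [hrank] at hucard
  -- convex hull of Q i lies in T i × [-1, 0]
  have hQhull : ∀ i, convexHull ℝ (Q i) ⊆ (T i) ×ˢ Set.Icc (-1 : ℝ) 0 := by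
    intro i
    apply convexHull_min
    · rintro pta (hp | hp)
      · rw [Set.mem_singleton_iff] at hp
        subst hp
        exact ⟨(hT i).2.2.2.2, by norm_num⟩
      · exact ⟨hp.1, by rw [Set.mem_singleton_iff.mp hp.2]; norm_num⟩
    · exact ((hT i).2.2.1).prod (convex_Icc _ _)
  -- choose preimages
  have hpre : ∀ i, ∃ pta : (Fin (ni i) → ℝ) × ℝ,
      pta ∈ convexHull ℝ (Q i) ∧ Lmap i pta = u i ∧ (u i ∈ S i → pta ∈ Q i) := by
    intro i
    by_cases hui : u i ∈ S i
    · obtain ⟨pta, hpQ, hpe⟩ := hui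
      exact ⟨pta, subset_convexHull ℝ _ hpQ, hpe, fun _ => hpQ⟩
    · have h := hu i
      rw [hSdef, ← LinearMap.image_convexHull] at h
      obtain ⟨pta, hpc, hpe⟩ := h
      exact ⟨pta, hpc, hpe, fun h' => absurd h' hui⟩
  choose p hpc hpe hpq using hpre
  have hpT : ∀ i, (p i).1 ∈ T i ∧ (p i).2 ∈ Set.Icc (-1 : ℝ) 0 := by
    intro i; exact ⟨(hQhull i (hpc i)).1, (hQhull i (hpc i)).2⟩
  refine ⟨fun i => (p i).1, fun i => if u i ∈ S i then (p i).2 else -1, ?_, ?_, ?_⟩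
  · intro i
    dsimp only
    by_cases hui : u i ∈ S i
    · rw [if_pos hui]
      exact hpq i hui
    · rw [if_neg hui]
      exact Or.inr ⟨(hpT i).1, rfl⟩
  · have h1 : ∀ i, (A i).mulVec ((p i).1) = (u i).1 := by
      intro i
      have := hpe i
      rw [hLapp] at this
      exact congrArg Prod.fst this
    calc ∑ i, (A i).mulVec ((p i).1) = ∑ i, (u i).1 :=
            Finset.sum_congr rfl fun i _ => h1 i
      _ = (∑ i, u i).1 := (Prod.fst_sum).symm
      _ = (∑ i, v i).1 := by rw [husum]
      _ = ∑ i, (v i).1 := Prod.fst_sum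
      _ = y := by
            rw [hy]
            refine Finset.sum_congr rfl fun i _ => ?_
            simp only [hvdef, hLapp]
  · -- cost bound
    have h2 : ∀ i, (u i).2 = q i * (p i).2 := by
      intro i
      have := hpe i
      rw [hLapp] at this
      exact (congrArg Prod.snd this).symm
    have husum2 : ∑ i, (u i).2 = c := by
      calc ∑ i, (u i).2 = (∑ i, u i).2 := (Prod.snd_sum).symm
        _ = (∑ i, v i).2 := by rw [husum]
        _ = ∑ i, (v i).2 := Prod.snd_sum
        _ = c := by
              rw [hc]
              refine Finset.sum_congr rfl fun i _ => ?_
              simp only [hvdef, hLapp]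
    set B : Finset (Fin m) := Finset.univ.filter (fun i => u i ∉ S i) with hBdef
    have hpoint : ∀ i, (u i).2 - (if u i ∈ S i then 0 else q i)
        ≤ q i * (if u i ∈ S i then (p i).2 else -1) := by
      intro i
      by_cases hui : u i ∈ S i
      · rw [if_pos hui, if_pos hui, h2 i]; ring_nf; exact le_refl _
      · rw [if_neg hui, if_neg hui, h2 i]
        have h0 : q i * (p i).2 ≤ 0 := mul_nonpos_of_nonneg_of_nonpos (hq i) (hpT i).2.2
        linarith
    have hsumge : ∑ i, (u i).2 - ∑ i, (if u i ∈ S i then 0 else q i)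
        ≤ ∑ i, q i * (if u i ∈ S i then (p i).2 else -1) := by
      rw [← Finset.sum_sub_distrib]
      exact Finset.sum_le_sum fun i _ => hpoint i
    have hBsum : ∑ i, (if u i ∈ S i then 0 else q i) = ∑ i ∈ B, q i := by
      rw [hBdef, Finset.sum_filter]
      refine Finset.sum_congr rfl fun i _ => ?_
      by_cases hui : u i ∈ S i <;> simp [hui]
    have hM : ∀ i, q i ≤ ⨆ i, q i := fun i =>
      le_ciSup (Set.Finite.bddAbove (Set.finite_range q)) i
    have hM0 : (0 : ℝ) ≤ ⨆ i, q i := le_trans (hq ⟨0, hm⟩) (hM ⟨0, hm⟩)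
    have hBle : ∑ i ∈ B, q i ≤ (B.card : ℝ) * (⨆ i, q i) := by
      have := Finset.sum_le_card_nsmul B q (⨆ i, q i) (fun i _ => hM i)
      rwa [nsmul_eq_mul] at this
    have hBn : (B.card : ℝ) ≤ (n : ℝ) + 1 := by
      have : B.card ≤ n + 1 := hucard
      exact_mod_cast this
    have : (B.card : ℝ) * (⨆ i, q i) ≤ ((n : ℝ) + 1) * (⨆ i, q i) :=
      mul_le_mul_of_nonneg_right hBn hM0
    rw [ge_iff_le]
    calc c - ((n : ℝ) + 1) * (⨆ i, q i)
        ≤ c - ∑ i ∈ B, q i := by linarith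
      _ = ∑ i, (u i).2 - ∑ i, (if u i ∈ S i then 0 else q i) := by rw [husum2, hBsum]
      _ ≤ ∑ i, q i * (if u i ∈ S i then (p i).2 else -1) := hsumge
end

section
/- Let T_i ⊆ ℝ^{n_i} be allowable flow sets, A_i ∈ ℝ^{n×n_i} selector matrices, q ∈ ℝ^m with q ≥ 0, Q_i = {0} ∪ (T_i × {−1}), and let U : ℝ^n → ℝ ∪ {−∞}. Define p⋆ = sup{ U(Σ_i A_i x_i) + Σ_i q_i λ_i : (x_i, λ_i) ∈ Q_i for all i } and p⁰ = sup{ U(Σ_i A_i x_i) + Σ_i q_i λ_i : (x_i, λ_i) ∈ conv(Q_i) for all i }. Then 0 ≤ p⁰ − p⋆ ≤ (n+1) · max_i q_i (interpreting the inequalities in the extended reals). -/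
section AuxGap
open Finset

/-- Characterization of the convex hull of `{0} ∪ T ×ˢ {-1}`. -/
lemma mem_convQ {k : ℕ} {T : Set (Fin k → ℝ)} (hne : T.Nonempty) (hconv : Convex ℝ T)
    {p : (Fin k → ℝ) × ℝ}
    (hp : p ∈ convexHull ℝ ({0} ∪ T ×ˢ {(-1 : ℝ)} : Set ((Fin k → ℝ) × ℝ))) :
    ∃ θ t, θ ∈ Set.Icc (0:ℝ) 1 ∧ t ∈ T ∧ p = (θ • t, -θ) := by
  rw [Set.singleton_union, convexHull_insert (hne.prod (Set.singleton_nonempty _)),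
    (hconv.prod (convex_singleton _)).convexHull_eq, mem_convexJoin] at hp
  obtain ⟨a, ha, b, hb, hseg⟩ := hp
  rw [Set.mem_singleton_iff] at ha
  subst ha
  rw [segment_eq_image] at hseg
  obtain ⟨θ, hθ, rfl⟩ := hseg
  obtain ⟨hbT, hb2⟩ := hb
  rw [Set.mem_singleton_iff] at hb2
  refine ⟨θ, b.1, hθ, hbT, ?_⟩
  have : b = (b.1, -1) := by
    ext <;> simp [hb2]
  rw [this]
  show (1 - θ) • (0:(Fin k → ℝ) × ℝ) + θ • (b.1, -1) = (θ • b.1, -θ)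
  rw [smul_zero, zero_add, Prod.smul_mk]
  simp [smul_eq_mul]

/-- One perturbation step along a kernel direction `c`. -/
lemma perturb_step {m : ℕ} {n : ℕ} (u : Fin m → (Fin n → ℝ)) (q : Fin m → ℝ)
    (θ : Fin m → ℝ) (hθ : ∀ i, θ i ∈ Set.Icc (0:ℝ) 1)
    (c : Fin m → ℝ)
    (hsupp : ∀ i, c i ≠ 0 → 0 < θ i ∧ θ i < 1)
    (hsum : ∑ i, c i • u i = 0)
    (hqc : ∑ i, q i * c i ≤ 0)
    (i₀ : Fin m) (hi₀ : c i₀ ≠ 0) :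
    ∃ θ₁ : Fin m → ℝ, (∀ i, θ₁ i ∈ Set.Icc (0:ℝ) 1) ∧
      (∑ i, θ₁ i • u i = ∑ i, θ i • u i) ∧
      (∑ i, q i * θ₁ i ≤ ∑ i, q i * θ i) ∧
      (∀ i, (θ₁ i ≠ 0 ∧ θ₁ i ≠ 1) → (θ i ≠ 0 ∧ θ i ≠ 1)) ∧
      (∃ j, (θ j ≠ 0 ∧ θ j ≠ 1) ∧ ¬(θ₁ j ≠ 0 ∧ θ₁ j ≠ 1)) := by
  classical
  set D : Finset (Fin m) := univ.filter (fun i => c i ≠ 0) with hD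
  have hDne : D.Nonempty := ⟨i₀, by simp [hD, hi₀]⟩
  set b : Fin m → ℝ := fun i => if 0 < c i then (1 - θ i) / c i else θ i / (-c i) with hb
  set t : ℝ := D.inf' hDne b with htdef
  have hbpos : ∀ i ∈ D, 0 < b i := by
    intro i hiD
    have hci : c i ≠ 0 := by simpa [hD] using hiD
    obtain ⟨h1, h2⟩ := hsupp i hci
    by_cases hc : 0 < c i
    · simp only [hb, if_pos hc]
      exact div_pos (by linarith) hc
    · have hcneg : c i < 0 := lt_of_le_of_ne (not_lt.mp hc) hci
      simp only [hb, if_neg hc]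
      exact div_pos h1 (by linarith)
  have htpos : 0 < t := by
    rw [htdef, Finset.lt_inf'_iff]
    exact hbpos
  have htle : ∀ i ∈ D, t ≤ b i := fun i hi => Finset.inf'_le _ hi
  refine ⟨fun i => θ i + t * c i, ?_, ?_, ?_, ?_, ?_⟩
  · intro i
    simp only [Set.mem_Icc]
    by_cases hci : c i = 0
    · simpa [hci] using hθ i
    · have hiD : i ∈ D := by simp [hD, hci]
      obtain ⟨h1, h2⟩ := hsupp i hci
      have htbi := htle i hiD
      by_cases hc : 0 < c i
      · constructor
        · have : 0 ≤ t * c i := le_of_lt (mul_pos htpos hc)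
          linarith
        · have : t * c i ≤ b i * c i := mul_le_mul_of_nonneg_right htbi (le_of_lt hc)
          have hbc : b i * c i = 1 - θ i := by
            simp only [hb, if_pos hc]
            rw [div_mul_cancel₀ _ hci]
          linarith
      · have hcneg : c i < 0 := lt_of_le_of_ne (not_lt.mp hc) hci
        constructor
        · have : b i * c i ≤ t * c i := mul_le_mul_of_nonpos_right htbi (le_of_lt hcneg)
          have hbc : b i * c i = -θ i := by
            simp only [hb, if_neg hc]
            rw [div_neg, neg_mul, div_mul_cancel₀ _ hci]
          linarith
        · have : t * c i ≤ 0 := le_of_lt (mul_neg_of_pos_of_neg htpos hcneg)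
          linarith
  · have : ∑ i, (θ i + t * c i) • u i = ∑ i, θ i • u i + t • ∑ i, c i • u i := by
      rw [Finset.smul_sum]
      rw [← Finset.sum_add_distrib]
      refine Finset.sum_congr rfl fun i _ => ?_
      rw [add_smul, mul_smul]
    rw [this, hsum, smul_zero, add_zero]
  · have heq : ∑ i, q i * (θ i + t * c i) = ∑ i, q i * θ i + t * ∑ i, q i * c i := by
      rw [Finset.mul_sum, ← Finset.sum_add_distrib]
      refine Finset.sum_congr rfl fun i _ => ?_
      ring
    rw [heq]
    nlinarith [mul_nonpos_of_nonneg_of_nonpos (le_of_lt htpos) hqc]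
  · intro i hfrac
    by_cases hci : c i = 0
    · simpa [hci] using hfrac
    · have := hsupp i hci
      exact ⟨ne_of_gt this.1, ne_of_lt this.2⟩
  · obtain ⟨j, hjD, hjt⟩ := Finset.exists_mem_eq_inf' hDne b
    have hcj : c j ≠ 0 := by simpa [hD] using hjD
    obtain ⟨h1, h2⟩ := hsupp j hcj
    refine ⟨j, ⟨ne_of_gt h1, ne_of_lt h2⟩, ?_⟩
    by_cases hc : 0 < c j
    · have h1' : θ j + t * c j = 1 := by
        rw [htdef, hjt]
        simp only [hb, if_pos hc]
        rw [div_mul_cancel₀ _ hcj]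
        ring
      simp [h1']
    · have hcneg : c j < 0 := lt_of_le_of_ne (not_lt.mp hc) hcj
      have h0' : θ j + t * c j = 0 := by
        rw [htdef, hjt]
        simp only [hb, if_neg hc]
        rw [div_neg, neg_mul, div_mul_cancel₀ _ hcj]
        ring
      simp [h0']

/-- One full reduction step: if more than `n` coordinates are fractional,
we can strictly reduce their number. -/
lemma reduce_step {m n : ℕ} (u : Fin m → (Fin n → ℝ)) (q : Fin m → ℝ)
    (θ : Fin m → ℝ) (hθ : ∀ i, θ i ∈ Set.Icc (0:ℝ) 1)
    (hcard : n < (univ.filter (fun i => θ i ≠ 0 ∧ θ i ≠ 1)).card) :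
    ∃ θ₁ : Fin m → ℝ, (∀ i, θ₁ i ∈ Set.Icc (0:ℝ) 1) ∧
      (∑ i, θ₁ i • u i = ∑ i, θ i • u i) ∧
      (∑ i, q i * θ₁ i ≤ ∑ i, q i * θ i) ∧
      (univ.filter (fun i => θ₁ i ≠ 0 ∧ θ₁ i ≠ 1)).card
        < (univ.filter (fun i => θ i ≠ 0 ∧ θ i ≠ 1)).card := by
  classical
  set F : Finset (Fin m) := univ.filter (fun i => θ i ≠ 0 ∧ θ i ≠ 1) with hF
  have hnotli : ¬ LinearIndependent ℝ (fun i : ↥F => u ↑i) := by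
    intro h
    have hle := h.fintype_card_le_finrank
    rw [Module.finrank_fin_fun, Fintype.card_coe] at hle
    omega
  obtain ⟨g, hg0, i₀, hgi₀⟩ := Fintype.not_linearIndependent_iff.mp hnotli
  set c₀ : Fin m → ℝ := fun i => if h : i ∈ F then g ⟨i, h⟩ else 0 with hc₀
  have hc₀sum : ∑ i, c₀ i • u i = 0 := by
    calc ∑ i, c₀ i • u i = ∑ i ∈ F, c₀ i • u i := by
          refine (Finset.sum_subset (subset_univ F) ?_).symm
          intro x _ hx
          simp [hc₀, hx]
      _ = ∑ i : ↥F, c₀ ↑i • u ↑i := (Finset.sum_coe_sort F _).symm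
      _ = ∑ i : ↥F, g i • u ↑i := by
          refine Finset.sum_congr rfl fun i _ => ?_
          simp [hc₀, i.2]
      _ = 0 := hg0
  have hc₀supp : ∀ i, c₀ i ≠ 0 → 0 < θ i ∧ θ i < 1 := by
    intro i hi
    by_cases h : i ∈ F
    · have := (Finset.mem_filter.mp h).2
      obtain ⟨h0, h1⟩ := this
      obtain ⟨ha, hb⟩ := hθ i
      exact ⟨lt_of_le_of_ne ha (Ne.symm h0), lt_of_le_of_ne hb h1⟩
    · simp [hc₀, h] at hi
  have hc₀i₀ : c₀ (↑i₀) ≠ 0 := by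
    simpa [hc₀, i₀.2] using hgi₀
  -- choose the sign so the cost direction is nonpositive
  obtain ⟨c, hcsupp, hcsum, hcqc, hci₀⟩ :
      ∃ c : Fin m → ℝ, (∀ i, c i ≠ 0 → 0 < θ i ∧ θ i < 1) ∧
        (∑ i, c i • u i = 0) ∧ (∑ i, q i * c i ≤ 0) ∧ c (↑i₀) ≠ 0 := by
    rcases le_or_gt (∑ i, q i * c₀ i) 0 with h | h
    · exact ⟨c₀, hc₀supp, hc₀sum, h, hc₀i₀⟩
    · refine ⟨-c₀, fun i hi => hc₀supp i (by simpa using hi), ?_, ?_, by simpa using hc₀i₀⟩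
      · simp only [Pi.neg_apply, neg_smul]
        rw [Finset.sum_neg_distrib, hc₀sum, neg_zero]
      · have : ∑ i, q i * (-c₀) i = -(∑ i, q i * c₀ i) := by
          rw [← Finset.sum_neg_distrib]
          exact Finset.sum_congr rfl fun i _ => by simp [mul_neg]
        rw [this]
        linarith
  obtain ⟨θ₁, h1, h2, h3, h4, j, hj1, hj2⟩ :=
    perturb_step u q θ hθ c hcsupp hcsum hcqc (↑i₀) hci₀
  refine ⟨θ₁, h1, h2, h3, ?_⟩
  apply Finset.card_lt_card
  rw [Finset.ssubset_iff_of_subset]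
  · exact ⟨j, by simp [hF, hj1], by simp [hj2]⟩
  · intro x hx
    simp only [hF, Finset.mem_filter, Finset.mem_univ, true_and] at hx ⊢
    exact h4 x hx

lemma round_aux {m n : ℕ} (u : Fin m → (Fin n → ℝ)) (q : Fin m → ℝ) :
    ∀ (N : ℕ) (θ : Fin m → ℝ), (∀ i, θ i ∈ Set.Icc (0:ℝ) 1) →
      (univ.filter (fun i => θ i ≠ 0 ∧ θ i ≠ 1)).card ≤ N →
      ∃ θ' : Fin m → ℝ, (∀ i, θ' i ∈ Set.Icc (0:ℝ) 1) ∧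
        (∑ i, θ' i • u i = ∑ i, θ i • u i) ∧
        (∑ i, q i * θ' i ≤ ∑ i, q i * θ i) ∧
        (univ.filter (fun i => θ' i ≠ 0 ∧ θ' i ≠ 1)).card ≤ n := by
  intro N
  induction N with
  | zero =>
    intro θ hθ hcard
    exact ⟨θ, hθ, rfl, le_refl _, le_trans hcard (Nat.zero_le n)⟩
  | succ N ih =>
    intro θ hθ hcard
    by_cases h : (univ.filter (fun i => θ i ≠ 0 ∧ θ i ≠ 1)).card ≤ n
    · exact ⟨θ, hθ, rfl, le_refl _, h⟩
    · push_neg at h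
      obtain ⟨θ₁, h1, h2, h3, h4⟩ := reduce_step u q θ hθ h
      obtain ⟨θ', g1, g2, g3, g4⟩ := ih θ₁ h1 (by omega)
      exact ⟨θ', g1, g2.trans h2, g3.trans h3, g4⟩

lemma round_theta {m n : ℕ} (u : Fin m → (Fin n → ℝ)) (q : Fin m → ℝ)
    (θ : Fin m → ℝ) (hθ : ∀ i, θ i ∈ Set.Icc (0:ℝ) 1) :
    ∃ θ' : Fin m → ℝ, (∀ i, θ' i ∈ Set.Icc (0:ℝ) 1) ∧
      (∑ i, θ' i • u i = ∑ i, θ i • u i) ∧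
      (∑ i, q i * θ' i ≤ ∑ i, q i * θ i) ∧
      (univ.filter (fun i => θ' i ≠ 0 ∧ θ' i ≠ 1)).card ≤ n :=
  round_aux u q (univ.filter (fun i => θ i ≠ 0 ∧ θ i ≠ 1)).card θ hθ (le_refl _)

end AuxGap

open Finset

/-- tightness of the fixed-fee relaxation: with allowable flow
sets `T_i`, selector matrices `A_i`, nonnegative fees `q`,
`Q_i = {0} ∪ (T_i × {−1})`, and a utility `U : ℝ^n → ℝ ∪ {−∞}` (an
`EReal`-valued function never equal to `+∞`), the optimal value `p⋆` of the
fixed-fee problem and the optimal value `p⁰` of its convex relaxation satisfy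
`0 ≤ p⁰ − p⋆ ≤ (n+1)·max_i q_i`, i.e. `p⋆ ≤ p⁰` and
`p⁰ ≤ p⋆ + (n+1)·max_i q_i` in the extended reals. -/
theorem fixed_fee_relaxation_gap
    (n m : ℕ) (hm : 0 < m) (ni : Fin m → ℕ)
    (T : ∀ i : Fin m, Set (Fin (ni i) → ℝ))
    (hT : ∀ i, IsAllowableFlowSet (T i))
    (A : ∀ i : Fin m, Matrix (Fin n) (Fin (ni i)) ℝ)
    (hA : ∀ i, IsSelectorMatrix (A i))
    (q : Fin m → ℝ) (hq : ∀ i, 0 ≤ q i)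
    (U : (Fin n → ℝ) → EReal) (hU : ∀ y, U y ≠ ⊤)
    (pstar p0 : EReal)
    (hpstar : pstar = sSup {v : EReal |
      ∃ (x : ∀ i : Fin m, Fin (ni i) → ℝ) (lam : Fin m → ℝ),
        (∀ i, (x i, lam i) ∈
          ({0} ∪ (T i) ×ˢ {(-1 : ℝ)} : Set ((Fin (ni i) → ℝ) × ℝ))) ∧
        v = U (∑ i, (A i).mulVec (x i)) + ((∑ i, q i * lam i : ℝ) : EReal)})
    (hp0 : p0 = sSup {v : EReal |
      ∃ (x : ∀ i : Fin m, Fin (ni i) → ℝ) (lam : Fin m → ℝ),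
        (∀ i, (x i, lam i) ∈
          convexHull ℝ ({0} ∪ (T i) ×ˢ {(-1 : ℝ)} : Set ((Fin (ni i) → ℝ) × ℝ))) ∧
        v = U (∑ i, (A i).mulVec (x i)) + ((∑ i, q i * lam i : ℝ) : EReal)}) :
    pstar ≤ p0 ∧ p0 ≤ pstar + (((n + 1 : ℝ) * ⨆ i, q i : ℝ) : EReal) := by
  classical
  set M : ℝ := ⨆ i, q i with hM
  have hbdd : BddAbove (Set.range q) := Set.Finite.bddAbove (Set.finite_range q)
  have hqM : ∀ i, q i ≤ M := fun i => le_ciSup hbdd i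
  have hM0 : 0 ≤ M := le_trans (hq ⟨0, hm⟩) (hqM ⟨0, hm⟩)
  constructor
  · rw [hpstar, hp0]
    apply sSup_le_sSup
    rintro v ⟨x, lam, hmem, rfl⟩
    exact ⟨x, lam, fun i => subset_convexHull ℝ _ (hmem i), rfl⟩
  · rw [hp0]
    apply sSup_le
    rintro v ⟨x, lam, hmem, rfl⟩
    have hform : ∀ i, ∃ θ t, θ ∈ Set.Icc (0:ℝ) 1 ∧ t ∈ T i ∧ (x i, lam i) = (θ • t, -θ) :=
      fun i => mem_convQ (hT i).1 (hT i).2.2.1 (hmem i)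
    choose θ t hθIcc htT hxeq using hform
    have hx : ∀ i, x i = θ i • t i := fun i => congrArg Prod.fst (hxeq i)
    have hlam : ∀ i, lam i = -θ i := fun i => congrArg Prod.snd (hxeq i)
    set u : Fin m → (Fin n → ℝ) := fun i => (A i).mulVec (t i) with hu
    have hy : ∑ i, (A i).mulVec (x i) = ∑ i, θ i • u i := by
      refine Finset.sum_congr rfl fun i _ => ?_
      rw [hx i, Matrix.mulVec_smul]
    obtain ⟨θ', hθ'Icc, hsumeq, hcost, hcard⟩ := round_theta u q θ hθIcc
    set x' : ∀ i : Fin m, Fin (ni i) → ℝ := fun i => θ' i • t i with hx'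
    set lam' : Fin m → ℝ := fun i => if θ' i = 0 then 0 else -1 with hlam'
    have hy' : ∑ i, (A i).mulVec (x' i) = ∑ i, (A i).mulVec (x i) := by
      rw [hy, ← hsumeq]
      refine Finset.sum_congr rfl fun i _ => ?_
      rw [hx', Matrix.mulVec_smul]
    have hmem' : ∀ i, (x' i, lam' i) ∈
        ({0} ∪ (T i) ×ˢ {(-1 : ℝ)} : Set ((Fin (ni i) → ℝ) × ℝ)) := by
      intro i
      by_cases h : θ' i = 0
      · left
        simp [hx', hlam', h, Prod.ext_iff]
      · right
        refine ⟨?_, by simp [hlam', h]⟩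
        exact (hT i).2.2.1.smul_mem_of_zero_mem (hT i).2.2.2.2 (htT i) (hθ'Icc i)
    -- the key real inequality
    set G : Finset (Fin m) := univ.filter (fun i => θ' i ≠ 0) with hG
    set F' : Finset (Fin m) := univ.filter (fun i => θ' i ≠ 0 ∧ θ' i ≠ 1) with hF'
    have hlamsum : ∑ i, q i * lam' i = -∑ i ∈ G, q i := by
      rw [hG, Finset.sum_filter, ← Finset.sum_neg_distrib]
      refine Finset.sum_congr rfl fun i _ => ?_
      by_cases h : θ' i = 0 <;> simp [hlam', h]
    have hGbound : ∑ i ∈ G, q i ≤ ∑ i, q i * θ i + (↑n + 1) * M := by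
      have hsplit : ∑ i ∈ G ∩ F', q i + ∑ i ∈ G \ F', q i = ∑ i ∈ G, q i :=
        Finset.sum_inter_add_sum_sdiff G F' q
      have hb1 : ∑ i ∈ G ∩ F', q i ≤ (↑n) * M := by
        calc ∑ i ∈ G ∩ F', q i ≤ (G ∩ F').card • M :=
              Finset.sum_le_card_nsmul _ _ _ (fun i _ => hqM i)
          _ = ((G ∩ F').card : ℝ) * M := nsmul_eq_mul _ _
          _ ≤ (↑n) * M := by
              apply mul_le_mul_of_nonneg_right _ hM0
              have h1 : (G ∩ F').card ≤ F'.card := Finset.card_le_card (Finset.inter_subset_right)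
              exact_mod_cast le_trans h1 hcard
      have hb2 : ∑ i ∈ G \ F', q i ≤ ∑ i, q i * θ' i := by
        have : ∑ i ∈ G \ F', q i = ∑ i ∈ G \ F', q i * θ' i := by
          refine Finset.sum_congr rfl fun i hi => ?_
          have hiG : i ∈ G := (Finset.mem_sdiff.mp hi).1
          have hiF : i ∉ F' := (Finset.mem_sdiff.mp hi).2
          have h0 : θ' i ≠ 0 := by
            rw [hG] at hiG; simpa using hiG
          have h1 : θ' i = 1 := by
            rw [hF'] at hiF
            simp only [Finset.mem_filter, Finset.mem_univ, true_and, not_and, not_not] at hiF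
            exact hiF h0
          rw [h1, mul_one]
        rw [this]
        refine Finset.sum_le_sum_of_subset_of_nonneg (Finset.subset_univ _) fun i _ _ => ?_
        exact mul_nonneg (hq i) (hθ'Icc i).1
      have hcost' : ∑ i, q i * θ' i ≤ ∑ i, q i * θ i := hcost
      linarith
    have key : ∑ i, q i * lam i ≤ ∑ i, q i * lam' i + (↑n + 1) * M := by
      have : ∑ i, q i * lam i = -∑ i, q i * θ i := by
        rw [← Finset.sum_neg_distrib]
        exact Finset.sum_congr rfl fun i _ => by rw [hlam i]; ring
      rw [this, hlamsum]
      linarith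
    -- conclude in EReal
    have hmemstar : U (∑ i, (A i).mulVec (x i)) + ((∑ i, q i * lam' i : ℝ) : EReal) ≤ pstar := by
      rw [hpstar]
      apply le_sSup
      exact ⟨x', lam', hmem', by rw [hy']⟩
    calc U (∑ i, (A i).mulVec (x i)) + ((∑ i, q i * lam i : ℝ) : EReal)
        ≤ U (∑ i, (A i).mulVec (x i)) +
            ((∑ i, q i * lam' i + (↑n + 1) * M : ℝ) : EReal) := by
          apply add_le_add_right
          exact_mod_cast key
      _ = (U (∑ i, (A i).mulVec (x i)) + ((∑ i, q i * lam' i : ℝ) : EReal)) +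
            (((↑n + 1) * M : ℝ) : EReal) := by
          rw [EReal.coe_add, ← add_assoc]
      _ ≤ pstar + (((n + 1 : ℝ) * M : ℝ) : EReal) := by
          apply add_le_add_left hmemstar
end

section
/- Let T_i ⊆ ℝ^{n_i} be allowable flow sets with flow cones K_i, let A_i ∈ ℝ^{n×n_i} be selector matrices, and let U : ℝ^n → ℝ ∪ {−∞} and V_i : ℝ^{n_i} → ℝ ∪ {−∞} be arbitrary functions. Then the conic relaxation is exact: sup{ U(Σ_i A_i x_i) + Σ_i V_i(x_i) : x_i ∈ T_i for all i } = sup{ U(Σ_i A_i x_i) + Σ_i V_i(x_i) : (x_i, λ_i) ∈ K_i and λ_i ≥ −1 for all i }. -/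
lemma mem_of_flowCone {n : ℕ} {T : Set (Fin n → ℝ)}
    (hne : T.Nonempty) (hcl : IsClosed T) (hconv : Convex ℝ T)
    (h0 : (0 : Fin n → ℝ) ∈ T)
    {x : Fin n → ℝ} {lam : ℝ}
    (h : (x, lam) ∈ closure {p : (Fin n → ℝ) × ℝ | ∃ l : ℝ, 0 < l ∧ p.2 = -l ∧ l⁻¹ • p.1 ∈ T})
    (hlam : -1 ≤ lam) : x ∈ T := by
  rw [mem_closure_iff_seq_limit] at h
  obtain ⟨u, hu, hconv'⟩ := h
  choose l hlpos hl2 hl3 using hu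
  have h1 : Filter.Tendsto (fun k => (u k).1) Filter.atTop (nhds x) :=
    (continuous_fst.tendsto _).comp hconv'
  have h2 : Filter.Tendsto l Filter.atTop (nhds (-lam)) := by
    have : Filter.Tendsto (fun k => (u k).2) Filter.atTop (nhds lam) :=
      (continuous_snd.tendsto _).comp hconv'
    have := this.neg
    simpa [hl2] using this
  rcases lt_or_eq_of_le (show lam ≤ 0 by
      by_contra hpos
      push_neg at hpos
      have : -lam < 0 := by linarith
      obtain ⟨k, hk⟩ := (h2.eventually (eventually_lt_nhds this)).exists
      exact absurd hk (not_lt.mpr (hlpos k).le)) with (hneg | heq)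
  · -- lam < 0
    set l0 := -lam with hl0
    have hl0pos : 0 < l0 := by simp [hl0]; linarith
    have hinv : Filter.Tendsto (fun k => (l k)⁻¹ • (u k).1) Filter.atTop (nhds (l0⁻¹ • x)) := by
      exact Filter.Tendsto.smul (h2.inv₀ hl0pos.ne') h1
    have hy : l0⁻¹ • x ∈ T := hcl.mem_of_tendsto hinv (Filter.Eventually.of_forall hl3)
    have hle1 : l0 ≤ 1 := by simp [hl0]; linarith
    have := hconv hy h0 hl0pos.le (show (0:ℝ) ≤ 1 - l0 by linarith) (by ring)
    simpa [smul_smul, mul_inv_cancel₀ hl0pos.ne'] using this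
  · -- lam = 0, so l k → 0
    have hl0 : Filter.Tendsto l Filter.atTop (nhds 0) := by
      rw [heq] at h2; simpa using h2
    have hev : ∀ᶠ k in Filter.atTop, (u k).1 ∈ T := by
      filter_upwards [hl0.eventually (eventually_le_nhds (by norm_num : (0:ℝ) < 1))] with k hk
      have := hconv (hl3 k) h0 (hlpos k).le (show (0:ℝ) ≤ 1 - l k by linarith) (by ring)
      simpa [smul_smul, mul_inv_cancel₀ (hlpos k).ne'] using this
    exact hcl.mem_of_tendsto h1 hev

/-- exactness of the conic relaxation: for allowable flow sets
`T_i` with flow cones `K_i`, selector matrices `A_i`, and arbitrary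
`ℝ ∪ {−∞}`-valued utilities `U, V_i`, the optimal value of the convex flow
problem equals the optimal value of the relaxation with constraints
`(x_i, λ_i) ∈ K_i` and `λ_i ≥ −1`. -/
theorem conic_relaxation_exact
    (n m : ℕ) (ni : Fin m → ℕ)
    (T : ∀ i : Fin m, Set (Fin (ni i) → ℝ))
    (hT : ∀ i, IsAllowableFlowSet (T i))
    (A : ∀ i : Fin m, Matrix (Fin n) (Fin (ni i)) ℝ)
    (hA : ∀ i, IsSelectorMatrix (A i))
    (U : (Fin n → ℝ) → EReal) (hUtop : ∀ y, U y ≠ ⊤)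
    (V : ∀ i : Fin m, (Fin (ni i) → ℝ) → EReal) (hVtop : ∀ i x, V i x ≠ ⊤) :
    sSup {v : EReal | ∃ x : ∀ i : Fin m, Fin (ni i) → ℝ,
        (∀ i, x i ∈ T i) ∧
        v = U (∑ i, (A i).mulVec (x i)) + ∑ i, V i (x i)} =
      sSup {v : EReal | ∃ (x : ∀ i : Fin m, Fin (ni i) → ℝ) (lam : Fin m → ℝ),
        (∀ i, (x i, lam i) ∈ flowCone (T i) ∧ -1 ≤ lam i) ∧
        v = U (∑ i, (A i).mulVec (x i)) + ∑ i, V i (x i)} := by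
  congr 1
  ext v
  constructor
  · rintro ⟨x, hx, rfl⟩
    refine ⟨x, fun _ => -1, fun i => ⟨?_, le_refl _⟩, rfl⟩
    exact subset_closure ⟨1, one_pos, by norm_num, by simpa using hx i⟩
  · rintro ⟨x, lam, hx, rfl⟩
    exact ⟨x, fun i => mem_of_flowCone (hT i).1 (hT i).2.1 (hT i).2.2.1 (hT i).2.2.2.2
      (hx i).1 (hx i).2, rfl⟩
end

section
/- (Correctness of the knapsack reduction.) Let c ∈ ℤ^m with c ≥ 0 and let b ∈ ℤ with b ≥ 0. Consider the feasible set F of tuples (x, λ) ∈ ℝ^m × ℝ^m such that for each i, (x_i, λ_i) ∈ {(0,0)} ∪ ((−∞, c_i] × {−1}), and Σ_{i=1}^m x_i ≥ b. Then: (a) for every (x, λ) ∈ F, cᵀλ ≤ −b; and (b) there exists (x, λ) ∈ F with cᵀλ = −b if and only if there exists z ∈ {0,1}^m with cᵀz = b. -/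
/-- correctness of the knapsack reduction: let `c ∈ ℤ^m`,
`c ≥ 0`, `b ∈ ℤ`, `b ≥ 0`, and let `F` be the set of `(x, λ)` with
`(x_i, λ_i) ∈ {(0,0)} ∪ ((−∞, c_i] × {−1})` for each `i` and `Σ_i x_i ≥ b`.
Then (a) `cᵀλ ≤ −b` on `F`, and (b) `cᵀλ = −b` is attained on `F` iff there is
a binary vector `z ∈ {0,1}^m` with `cᵀz = b`. -/
theorem knapsack_reduction_correct
    (m : ℕ) (c : Fin m → ℤ) (hc : ∀ i, 0 ≤ c i) (b : ℤ) (hb : 0 ≤ b)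
    (F : Set ((Fin m → ℝ) × (Fin m → ℝ)))
    (hF : F = {p : (Fin m → ℝ) × (Fin m → ℝ) |
      (∀ i, (p.1 i = 0 ∧ p.2 i = 0) ∨ (p.1 i ≤ (c i : ℝ) ∧ p.2 i = -1)) ∧
      (b : ℝ) ≤ ∑ i, p.1 i}) :
    (∀ p ∈ F, ∑ i, (c i : ℝ) * p.2 i ≤ -(b : ℝ)) ∧
    ((∃ p ∈ F, ∑ i, (c i : ℝ) * p.2 i = -(b : ℝ)) ↔
      ∃ z : Fin m → ℤ, (∀ i, z i = 0 ∨ z i = 1) ∧ ∑ i, c i * z i = b) := by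
  subst hF
  have key : ∀ p : (Fin m → ℝ) × (Fin m → ℝ),
      (∀ i, (p.1 i = 0 ∧ p.2 i = 0) ∨ (p.1 i ≤ (c i : ℝ) ∧ p.2 i = -1)) →
      ∀ i, (c i : ℝ) * p.2 i ≤ -p.1 i := by
    intro p hp i
    rcases hp i with ⟨h1, h2⟩ | ⟨h1, h2⟩
    · simp [h1, h2]
    · rw [h2]
      have : (0:ℝ) ≤ c i := by exact_mod_cast hc i
      linarith
  have parta : ∀ p ∈ {p : (Fin m → ℝ) × (Fin m → ℝ) |
      (∀ i, (p.1 i = 0 ∧ p.2 i = 0) ∨ (p.1 i ≤ (c i : ℝ) ∧ p.2 i = -1)) ∧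
      (b : ℝ) ≤ ∑ i, p.1 i}, ∑ i, (c i : ℝ) * p.2 i ≤ -(b : ℝ) := by
    intro p hp
    obtain ⟨hp1, hp2⟩ := hp
    calc ∑ i, (c i : ℝ) * p.2 i ≤ ∑ i, -p.1 i :=
          Finset.sum_le_sum (fun i _ => key p hp1 i)
      _ = -(∑ i, p.1 i) := by rw [Finset.sum_neg_distrib]
      _ ≤ -(b : ℝ) := by linarith
  refine ⟨parta, ?_, ?_⟩
  · rintro ⟨p, ⟨hp1, hp2⟩, heq⟩
    -- equality forces each term equal and ∑ x = b
    have hsum : ∑ i, (c i : ℝ) * p.2 i = ∑ i, -p.1 i := by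
      have h1 : ∑ i, (c i : ℝ) * p.2 i ≤ ∑ i, -p.1 i :=
        Finset.sum_le_sum (fun i _ => key p hp1 i)
      have h2 : ∑ i, -p.1 i = -(∑ i, p.1 i) := Finset.sum_neg_distrib _
      linarith
    have hterms : ∀ i ∈ Finset.univ, (c i : ℝ) * p.2 i = -p.1 i :=
      (Finset.sum_eq_sum_iff_of_le (fun i _ => key p hp1 i)).mp hsum
    refine ⟨fun i => if p.2 i = 0 then 0 else 1, fun i => by dsimp; split <;> simp, ?_⟩
    have hxz : ∀ i, ((c i * (if p.2 i = 0 then 0 else 1) : ℤ) : ℝ) = p.1 i := by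
      intro i
      have ht := hterms i (Finset.mem_univ i)
      rcases hp1 i with ⟨h1, h2⟩ | ⟨h1, h2⟩
      · simp [h1, h2]
      · rw [h2] at ht ⊢
        have : p.1 i = (c i : ℝ) := by linarith
        norm_num [this]
    have : ((∑ i, c i * (if p.2 i = 0 then 0 else 1) : ℤ) : ℝ) = (b : ℝ) := by
      push_cast
      rw [Finset.sum_congr rfl (fun i _ => by push_cast at hxz ⊢; exact hxz i)]
      have h2 : ∑ i, -p.1 i = -(∑ i, p.1 i) := Finset.sum_neg_distrib _
      rw [hsum] at heq
      linarith
    exact_mod_cast this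
  · rintro ⟨z, hz, hzb⟩
    refine ⟨⟨fun i => (c i : ℝ) * (z i : ℝ), fun i => -(z i : ℝ)⟩, ⟨?_, ?_⟩, ?_⟩
    · intro i
      rcases hz i with h | h
      · left; simp [h]
      · right
        constructor
        · simp [h]
        · simp [h]
    · have : ((∑ i, c i * z i : ℤ) : ℝ) = (b : ℝ) := by exact_mod_cast hzb
      push_cast at this
      simp only
      linarith [this]
    · have : ((∑ i, c i * z i : ℤ) : ℝ) = (b : ℝ) := by exact_mod_cast hzb
      push_cast at this
      simp only [mul_neg]
      rw [Finset.sum_neg_distrib]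
      linarith
end
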